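/- arXiv:2009.04259 — 2 statements merged into one kernel-verified Lean document; each statement's English description precedes it below -/
import Mathlib

section
/- For all natural numbers k, l, n, m with ⌈log n⌉^((k+1)·(l+1)) ≤ n and m < ⌈log n⌉^((k+1)·(l+1)), there is no predicate A : (Fin n → Bool) → Prop having acceptance certificates of size m such that for every binary string w of length n, A(w) holds if and only if w ∈ GENCONSEQ_{k+1,l}. (Combinatorial core of the lower bound (a) in Theorem 5.) -/
/-- `w` has a run of zeros of length `L` at position `i`. -/
def hasRunAt (n : ℕ) (w : Fin n → Bool) (i L : ℕ) : Prop :=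
  i + L ≤ n ∧ ∀ j : Fin n, i ≤ (j : ℕ) → (j : ℕ) < i + L → w j = false

/-- `w` has a run of zeros of length `L` (at some position). -/
def hasRun (n : ℕ) (w : Fin n → Bool) (L : ℕ) : Prop :=
  ∃ i : ℕ, hasRunAt n w i L

/-- `w ∈ GENCONSEQ_{k,l}`: `w` has a run of zeros of length `⌈log n⌉^(k·(l+1))`. -/
def GenConseqMem (k l n : ℕ) (w : Fin n → Bool) : Prop :=
  hasRun n w ((Nat.clog 2 n) ^ (k * (l + 1)))

/-- `A` has acceptance certificates of size `m`. -/
def HasAccCert (n m : ℕ) (A : (Fin n → Bool) → Prop) : Prop :=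
  ∀ w : Fin n → Bool, A w → ∃ S : Finset (Fin n), S.card ≤ m ∧
    ∀ v : Fin n → Bool, (∀ i ∈ S, v i = w i) → A v

/-!
The all-zero string has a run of length `L := ⌈log n⌉^((k+1)(l+1)) ≤ n`, so it is accepted with
a certificate `S` of fewer than `L` bits. The string that is zero exactly on `S` agrees with it on
`S` and is therefore accepted as well, yet all of its zeros lie in `S`, so it has no run of length
`L`.
-/

open Finset

theorem hasRun_const_false {n L : ℕ} (h : L ≤ n) : hasRun n (fun _ => false) L :=
  ⟨0, by simpa using h, fun _ _ _ => rfl⟩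

theorem hasRun.le_card_filter_false {n L : ℕ} {w : Fin n → Bool} (h : hasRun n w L) :
    L ≤ #{j | w j = false} := by
  obtain ⟨i, hin, hrun⟩ := h
  have hsub : Ico i (i + L) ⊆ ({j | w j = false} : Finset (Fin n)).map Fin.valEmbedding := by
    intro x hx
    rw [mem_Ico] at hx
    exact mem_map.2 ⟨⟨x, by omega⟩, by simpa using hrun ⟨x, by omega⟩ hx.1 hx.2, rfl⟩
  simpa using card_le_card hsub

theorem HasAccCert.exists_card_filter_false_le {n m : ℕ} {A : (Fin n → Bool) → Prop}
    (hA : HasAccCert n m A) (h0 : A fun _ => false) :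
    ∃ v, A v ∧ #{j | v j = false} ≤ m := by
  obtain ⟨S, hS, hSA⟩ := hA _ h0
  refine ⟨fun j => decide (j ∉ S), hSA _ fun j hj => by simp [hj], ?_⟩
  simpa using hS

theorem genconseq_lower_bound (k l n m : ℕ)
    (hkn : (Nat.clog 2 n) ^ ((k + 1) * (l + 1)) ≤ n)
    (hm : m < (Nat.clog 2 n) ^ ((k + 1) * (l + 1))) :
    ¬ ∃ A : (Fin n → Bool) → Prop, HasAccCert n m A ∧
        ∀ w : Fin n → Bool, (A w ↔ GenConseqMem (k + 1) l n w) := by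
  rintro ⟨A, hA, hAiff⟩
  obtain ⟨v, hv, hcard⟩ := hA.exists_card_filter_false_le ((hAiff _).2 (hasRun_const_false hkn))
  have hrun := ((hAiff v).1 hv).le_card_filter_false
  omega
end

section
/- For all natural numbers k and c, there exists N such that for every n ≥ N: (a) the membership predicate of NOCONSEQ_{k+1} on binary strings of length n has rejection certificates of size ⌈log n⌉^(k+1), and (b) there is no predicate A : (Fin n → Bool) → Prop having rejection certificates of size c · ⌈log n⌉^k with A(w) ↔ w ∈ NOCONSEQ_{k+1} for all w. (Query-complexity packaging of Theorem 3: ATIME^op[log^k n, 1] ⊊ ATIME^op[log^(k+1) n, 1], witnessed by NOCONSEQ_{k+1}.) -/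
/-- `w ∈ NOCONSEQ_k`: `w` has no run of zeros of length `⌈log n⌉^k`. -/
def NoConseqMem (k n : ℕ) (w : Fin n → Bool) : Prop :=
  ¬ hasRun n w ((Nat.clog 2 n) ^ k)

/-- `A` has rejection certificates of size `m`. -/
def HasRejCert (n m : ℕ) (A : (Fin n → Bool) → Prop) : Prop :=
  ∀ w : Fin n → Bool, ¬ A w → ∃ S : Finset (Fin n), S.card ≤ m ∧
    ∀ v : Fin n → Bool, (∀ i ∈ S, v i = w i) → ¬ A v

open Filter Finset

lemma eventually_two_mul_pow_le_two_pow (k : ℕ) : ∀ᶠ m : ℕ in atTop, 2 * m ^ k ≤ 2 ^ m := by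
  filter_upwards [(isLittleO_pow_const_const_pow_of_one_lt (R := ℝ) k one_lt_two).bound
    (by norm_num : (0 : ℝ) < 1 / 2)] with m hm
  simp only [norm_pow, Real.norm_natCast, Real.norm_ofNat] at hm
  exact_mod_cast (by linarith : (2 : ℝ) * m ^ k ≤ 2 ^ m)

lemma tendsto_clog_atTop {b : ℕ} (hb : 1 < b) : Tendsto (Nat.clog b) atTop atTop :=
  tendsto_atTop_atTop.mpr fun m =>
    ⟨b ^ m, fun _ hn => (Nat.clog_pow b m hb).symm.le.trans (Nat.clog_mono_right b hn)⟩

lemma eventually_clog_pow_le_self (k : ℕ) : ∀ᶠ n : ℕ in atTop, Nat.clog 2 n ^ k ≤ n := by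
  filter_upwards [(tendsto_clog_atTop one_lt_two).eventually (eventually_two_mul_pow_le_two_pow k),
    (tendsto_clog_atTop one_lt_two).eventually_gt_atTop 0] with n hpow hpos
  have hn : 1 < n := by simpa using (Nat.lt_clog_iff_pow_lt one_lt_two).1 hpos
  have hlt : 2 ^ (Nat.clog 2 n - 1) < n := by
    simpa only [Nat.pred_eq_sub_one] using Nat.pow_pred_clog_lt_self one_lt_two hn
  have hsplit : 2 ^ Nat.clog 2 n = 2 * 2 ^ (Nat.clog 2 n - 1) := by
    rw [← pow_succ']; congr 1; omega
  omega

section Runs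

variable {n : ℕ}

lemma hasRunAt.exists_finset {w : Fin n → Bool} {i L : ℕ} (h : hasRunAt n w i L) :
    ∃ S : Finset (Fin n), S.card = L ∧ (∀ j ∈ S, w j = false) ∧
      ∀ v : Fin n → Bool, (∀ j ∈ S, v j = w j) → hasRunAt n v i L := by
  obtain ⟨hle, hzero⟩ := h
  have mem_iff (j : Fin n) : j ∈ (Ico i (i + L)).attachFin
      (fun m hm => (mem_Ico.mp hm).2.trans_le hle) ↔ i ≤ j ∧ j < i + L := by
    rw [mem_attachFin, mem_Ico]
  refine ⟨_, by simp, fun j hj => hzero j ((mem_iff j).1 hj).1 ((mem_iff j).1 hj).2,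
    fun v hv => ⟨hle, fun j h1 h2 => ?_⟩⟩
  rw [hv j ((mem_iff j).2 ⟨h1, h2⟩)]
  exact hzero j h1 h2

lemma hasRun.le_card_zeros {w : Fin n → Bool} {L : ℕ} (h : hasRun n w L) :
    L ≤ #{j | w j = false} := by
  obtain ⟨i, hi⟩ := h
  obtain ⟨S, rfl, hzero, -⟩ := hi.exists_finset
  exact card_le_card fun j hj => mem_filter.2 ⟨mem_univ j, hzero j hj⟩

theorem hasRejCert_not_hasRun (L : ℕ) : HasRejCert n L (fun w => ¬ hasRun n w L) := by
  intro w hw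
  obtain ⟨i, hi⟩ := not_not.mp hw
  obtain ⟨S, hcard, -, hagree⟩ := hi.exists_finset
  exact ⟨S, hcard.le, fun v hv hv' => hv' ⟨i, hagree v hv⟩⟩

theorem not_hasRejCert_of_lt {L m : ℕ} (hLn : L ≤ n) (hmL : m < L) {A : (Fin n → Bool) → Prop}
    (hA : HasRejCert n m A) : ¬ ∀ w, A w ↔ ¬ hasRun n w L := by
  intro hiff
  have hzero : ¬ A (fun _ => false) := by
    rw [hiff, not_not]
    exact ⟨0, by omega, fun _ _ _ => rfl⟩
  obtain ⟨S, hS, hcert⟩ := hA _ hzero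
  have hrun : hasRun n (fun j => decide (j ∉ S)) L := by
    simpa [hiff] using hcert (fun j => decide (j ∉ S)) (by simp +contextual)
  have hLS : L ≤ #S := by simpa using hrun.le_card_zeros
  omega

end Runs

theorem noconseq_hierarchy (k c : ℕ) :
    ∃ N : ℕ, ∀ n : ℕ, n ≥ N →
      HasRejCert n ((Nat.clog 2 n) ^ (k + 1)) (fun w => NoConseqMem (k + 1) n w) ∧
      ¬ ∃ A : (Fin n → Bool) → Prop,
          HasRejCert n (c * (Nat.clog 2 n) ^ k) A ∧
          ∀ w : Fin n → Bool, (A w ↔ NoConseqMem (k + 1) n w) := by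
  obtain ⟨N, hN⟩ := eventually_atTop.mp ((eventually_clog_pow_le_self (k + 1)).and
    ((tendsto_clog_atTop one_lt_two).eventually_gt_atTop c))
  refine ⟨N, fun n hn => ⟨hasRejCert_not_hasRun _, ?_⟩⟩
  rintro ⟨A, hA, hiff⟩
  obtain ⟨hLn, hc⟩ := hN n hn
  have hlt : c * Nat.clog 2 n ^ k < Nat.clog 2 n ^ (k + 1) := by
    rw [pow_succ']
    exact Nat.mul_lt_mul_of_pos_right hc (pow_pos (c.zero_le.trans_lt hc) k)
  exact not_hasRejCert_of_lt hLn hlt hA hiff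
end
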